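/- arXiv:2206.05231 — 4 statements merged into one kernel-verified Lean document; each statement's English description precedes it below -/
import Mathlib

section
/- Let μ be a non-null Borel measure on a metric space (X,d) and scl a scaling. Then there exists a Borel set F ⊆ X with μ(F) > 0 such that lower-scl_B F ≤ lower-scl_Q μ and upper-scl_B F ≤ upper-scl_Q μ. In particular, lower-scl_B μ ≤ lower-scl_Q μ and upper-scl_B μ ≤ upper-scl_Q μ. -/
open Filter MeasureTheory Metric Set
open scoped ENNReal Topology NNReal

noncomputable section

/-- A *scaling* is a family `(s α)_{α>0}` of positive non-decreasing functions on `(0,1)`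
such that for all `α > β > 0` there is `λ₀ > 1` with, for every `λ ∈ (1, λ₀)`,
`s α ε / s β (ε^λ) → 0` and `s α ε / (s β ε)^λ → 0` as `ε → 0⁺`. -/
def IsScaling (s : ℝ → ℝ → ℝ) : Prop :=
  (∀ α : ℝ, 0 < α → ∀ ε ∈ Set.Ioo (0:ℝ) 1, 0 < s α ε) ∧
  (∀ α : ℝ, 0 < α → MonotoneOn (s α) (Set.Ioo (0:ℝ) 1)) ∧
  (∀ α β : ℝ, 0 < β → β < α → ∃ l₀ > (1:ℝ), ∀ l ∈ Set.Ioo (1:ℝ) l₀,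
    Tendsto (fun ε : ℝ => s α ε / s β (ε ^ l)) (𝓝[>] (0:ℝ)) (𝓝 0) ∧
    Tendsto (fun ε : ℝ => s α ε / (s β ε) ^ l) (𝓝[>] (0:ℝ)) (𝓝 0))

/-- The covering number `N_ε(E)`: minimal cardinality of a finite cover of `E` by balls of
radius `ε` centered in `E` (`+∞` if there is no such finite cover). -/
def coveringNumber {X : Type*} [MetricSpace X] (E : Set X) (ε : ℝ) : ℝ≥0∞ :=
  ⨅ (t : Finset X) (_ : (↑t : Set X) ⊆ E ∧ E ⊆ ⋃ x ∈ t, ball x ε), (t.card : ℝ≥0∞)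

/-- Lower box scale of a set. -/
def lowerBoxScale {X : Type*} [MetricSpace X] (s : ℝ → ℝ → ℝ) (E : Set X) : ℝ≥0∞ :=
  ⨆ (α : ℝ) (_ : 0 < α ∧ Tendsto (fun ε : ℝ => coveringNumber E ε * ENNReal.ofReal (s α ε))
      (𝓝[>] (0:ℝ)) (𝓝 (⊤ : ℝ≥0∞))), ENNReal.ofReal α

/-- Upper box scale of a set. -/
def upperBoxScale {X : Type*} [MetricSpace X] (s : ℝ → ℝ → ℝ) (E : Set X) : ℝ≥0∞ :=
  ⨅ (α : ℝ) (_ : 0 < α ∧ Tendsto (fun ε : ℝ => coveringNumber E ε * ENNReal.ofReal (s α ε))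
      (𝓝[>] (0:ℝ)) (𝓝 (0 : ℝ≥0∞))), ENNReal.ofReal α

/-- `H_ε^φ(E)`: Hausdorff pre-measure at scale `ε`, via countable covers by balls of radii
at most `ε`. -/
def hausdorffPre {X : Type*} [MetricSpace X] (φ : ℝ → ℝ) (E : Set X) (ε : ℝ) : ℝ≥0∞ :=
  ⨅ (c : ℕ → X) (r : ℕ → ℝ) (t : Set ℕ)
    (_ : (∀ n ∈ t, r n ∈ Set.Ioc (0:ℝ) ε) ∧ E ⊆ ⋃ n ∈ t, ball (c n) (r n)),
    ∑' n : t, ENNReal.ofReal (φ (r n))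

/-- `H^φ(E) = lim_{ε→0} H_ε^φ(E)`. -/
def hausdorffMeasureOf {X : Type*} [MetricSpace X] (φ : ℝ → ℝ) (E : Set X) : ℝ≥0∞ :=
  ⨆ (ε : ℝ) (_ : 0 < ε), hausdorffPre φ E ε

/-- Hausdorff scale of a set. -/
def hausdorffScale {X : Type*} [MetricSpace X] (s : ℝ → ℝ → ℝ) (E : Set X) : ℝ≥0∞ :=
  ⨆ (α : ℝ) (_ : 0 < α ∧ hausdorffMeasureOf (s α) E = ⊤), ENNReal.ofReal α

/-- Packing scale of a set, via countable covers and upper box scales. -/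
def packingScale {X : Type*} [MetricSpace X] (s : ℝ → ℝ → ℝ) (A : Set X) : ℝ≥0∞ :=
  ⨅ (E : ℕ → Set X) (_ : (⋃ n, E n) = A), ⨆ n, upperBoxScale s (E n)

/-- Lower local scale of a measure at a point. -/
def lowerLocalScale {X : Type*} [MetricSpace X] [MeasurableSpace X]
    (s : ℝ → ℝ → ℝ) (μ : Measure X) (x : X) : ℝ≥0∞ :=
  ⨆ (α : ℝ) (_ : 0 < α ∧ Tendsto (fun ε : ℝ => μ (ball x ε) / ENNReal.ofReal (s α ε))
      (𝓝[>] (0:ℝ)) (𝓝 (0 : ℝ≥0∞))), ENNReal.ofReal α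

/-- Upper local scale of a measure at a point. -/
def upperLocalScale {X : Type*} [MetricSpace X] [MeasurableSpace X]
    (s : ℝ → ℝ → ℝ) (μ : Measure X) (x : X) : ℝ≥0∞ :=
  ⨅ (α : ℝ) (_ : 0 < α ∧ Tendsto (fun ε : ℝ => μ (ball x ε) / ENNReal.ofReal (s α ε))
      (𝓝[>] (0:ℝ)) (𝓝 (⊤ : ℝ≥0∞))), ENNReal.ofReal α

/-- Scale of a measure: infimum of the scale over Borel sets of positive measure. -/
def measureScale {X : Type*} [MetricSpace X] [MeasurableSpace X]
    (sc : Set X → ℝ≥0∞) (μ : Measure X) : ℝ≥0∞ :=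
  ⨅ (E : Set X) (_ : MeasurableSet E ∧ 0 < μ E), sc E

/-- `*`-scale of a measure: infimum of the scale over Borel sets of full measure. -/
def measureScaleStar {X : Type*} [MetricSpace X] [MeasurableSpace X]
    (sc : Set X → ℝ≥0∞) (μ : Measure X) : ℝ≥0∞ :=
  ⨅ (E : Set X) (_ : MeasurableSet E ∧ μ Eᶜ = 0), sc E

/-- Quantization number `Q_μ(ε)`. -/
def quantizationNumber {X : Type*} [MetricSpace X] [MeasurableSpace X]
    (μ : Measure X) (ε : ℝ) : ℝ≥0∞ :=
  ⨅ (t : Finset X) (_ : ∫⁻ x, (⨅ c ∈ t, edist x c) ∂μ ≤ ENNReal.ofReal ε), (t.card : ℝ≥0∞)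

/-- Lower quantization scale of a measure. -/
def lowerQuantScale {X : Type*} [MetricSpace X] [MeasurableSpace X]
    (s : ℝ → ℝ → ℝ) (μ : Measure X) : ℝ≥0∞ :=
  ⨆ (α : ℝ) (_ : 0 < α ∧ Tendsto (fun ε : ℝ => quantizationNumber μ ε * ENNReal.ofReal (s α ε))
      (𝓝[>] (0:ℝ)) (𝓝 (⊤ : ℝ≥0∞))), ENNReal.ofReal α

/-- Upper quantization scale of a measure. -/
def upperQuantScale {X : Type*} [MetricSpace X] [MeasurableSpace X]
    (s : ℝ → ℝ → ℝ) (μ : Measure X) : ℝ≥0∞ :=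
  ⨅ (α : ℝ) (_ : 0 < α ∧ Tendsto (fun ε : ℝ => quantizationNumber μ ε * ENNReal.ofReal (s α ε))
      (𝓝[>] (0:ℝ)) (𝓝 (0 : ℝ≥0∞))), ENNReal.ofReal α

/-- Packing number `Ñ_ε(E)`: maximal cardinality of an `ε`-separated subset of `E`. -/
def packingNumber {X : Type*} [MetricSpace X] (E : Set X) (ε : ℝ) : ℝ≥0∞ :=
  ⨆ (t : Finset X) (_ : (↑t : Set X) ⊆ E ∧ ∀ x ∈ t, ∀ y ∈ t, x ≠ y → ε ≤ dist x y),
    (t.card : ℝ≥0∞)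

/-- `P_ε^φ(E)`: supremum of `Σ φ(r_i)` over `ε`-packs of `E` (pairwise disjoint balls of `E`,
centered in `E`, with radii at most `ε`). -/
def packingPre {X : Type*} [MetricSpace X] (φ : ℝ → ℝ) (E : Set X) (ε : ℝ) : ℝ≥0∞ :=
  ⨆ (t : Finset (X × ℝ)) (_ : (∀ p ∈ t, p.1 ∈ E ∧ p.2 ∈ Set.Ioc (0:ℝ) ε) ∧
      (↑t : Set (X × ℝ)).Pairwise fun p q => Disjoint (ball p.1 p.2 ∩ E) (ball q.1 q.2 ∩ E)),
    ∑ p ∈ t, ENNReal.ofReal (φ p.2)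

/-- The packing pre-measure `P_0^φ(E) = lim_{ε→0} P_ε^φ(E)`. -/
def packingPre0 {X : Type*} [MetricSpace X] (φ : ℝ → ℝ) (E : Set X) : ℝ≥0∞ :=
  ⨅ (ε : ℝ) (_ : 0 < ε), packingPre φ E ε

/-- The packing `φ`-measure `P^φ(E)`. -/
def packingMeasureOf {X : Type*} [MetricSpace X] (φ : ℝ → ℝ) (E : Set X) : ℝ≥0∞ :=
  ⨅ (F : ℕ → Set X) (_ : (⋃ n, F n) = E), ∑' n, packingPre0 φ (F n)

/-!
Take quantizers `C j` at levels `δ j` with `#(C j) ≤ Q_μ(δ j) + 1`. By Markov's inequality the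
points at distance `≥ r j` from `C j` have measure `≤ δ j / r j`; when `∑ δ j / r j < μ X`, the
set `F` of points lying within `r j` of `C j` for every `j` has positive measure, and
`N_{2 r j}(F) ≤ Q_μ(δ j) + 1`. With `r j = a ^ ((j + 1) * (j + 3) + 1)` and
`δ j = r j * a ^ (j + 1)`, every power `(2 r j) ^ λ`, `λ > 1`, is eventually below `δ (j + 1)`,
so the defining property of a scaling converts `N_η(F) · s α η` into `Q_μ(δ) · s β δ` for any
`β < α`.
-/

namespace IsScaling

variable {s : ℝ → ℝ → ℝ}

theorem tendsto_zero (hs : IsScaling s) {β : ℝ} (hβ : 0 < β) :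
    Tendsto (s β) (𝓝[>] 0) (𝓝 0) := by
  obtain ⟨l₀, hl₀, H⟩ := hs.2.2 β (β / 2) (by positivity) (half_lt_self hβ)
  obtain ⟨l, hl⟩ := exists_between hl₀
  have hβ2 : 0 < β / 2 := by positivity
  have hhalf : (1 / 2 : ℝ) ∈ Ioo 0 1 := by norm_num
  -- `s β ε = (s β ε / s (β/2) ε ^ l) * s (β/2) ε ^ l`, and the second factor is bounded near `0`
  refine squeeze_zero' ?_ ?_
    (by simpa only [zero_mul] using (H l hl).2.mul_const (s (β / 2) (1 / 2) ^ l))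
  · filter_upwards [Ioo_mem_nhdsGT one_pos] with ε hε using (hs.1 β hβ ε hε).le
  · filter_upwards [Ioo_mem_nhdsGT (by norm_num : (0 : ℝ) < 1 / 2)] with ε hε
    have hε1 : ε ∈ Ioo (0 : ℝ) 1 := ⟨hε.1, hε.2.trans (by norm_num)⟩
    have hpos : 0 < s (β / 2) ε := hs.1 _ hβ2 ε hε1
    calc s β ε = s β ε / s (β / 2) ε ^ l * s (β / 2) ε ^ l := by
          field_simp [(Real.rpow_pos_of_pos hpos l).ne']
      _ ≤ s β ε / s (β / 2) ε ^ l * s (β / 2) (1 / 2) ^ l := by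
          refine mul_le_mul_of_nonneg_left ?_ ?_
          · exact Real.rpow_le_rpow hpos.le (hs.2.1 _ hβ2 hε1 hhalf hε.2.le) (by linarith [hl.1])
          · exact div_nonneg (hs.1 β hβ ε hε1).le (Real.rpow_nonneg hpos.le l)

theorem tendsto_ofReal_zero (hs : IsScaling s) {β : ℝ} (hβ : 0 < β) :
    Tendsto (fun ε => ENNReal.ofReal (s β ε)) (𝓝[>] 0) (𝓝 0) := by
  simpa using ENNReal.tendsto_ofReal (hs.tendsto_zero hβ)

theorem exists_eventually_le_rpow (hs : IsScaling s) {α β : ℝ} (hβ : 0 < β) (hαβ : β < α) :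
    ∃ l > (1 : ℝ), ∀ᶠ ε in 𝓝[>] 0, s α ε ≤ s β (ε ^ l) := by
  obtain ⟨l₀, hl₀, H⟩ := hs.2.2 α β hβ hαβ
  obtain ⟨l, hl⟩ := exists_between hl₀
  refine ⟨l, hl.1, ?_⟩
  filter_upwards [(H l hl).1.eventually_lt_const one_pos, Ioo_mem_nhdsGT one_pos] with ε h hε
  have hεl : ε ^ l ∈ Ioo (0 : ℝ) 1 :=
    ⟨Real.rpow_pos_of_pos hε.1 l, Real.rpow_lt_one hε.1.le hε.2 (by linarith [hl.1])⟩
  exact ((div_lt_one (hs.1 β hβ _ hεl)).1 h).le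

theorem eventually_le_of_rpow_le (hs : IsScaling s) {α β : ℝ} (hβ : 0 < β) (hαβ : β < α)
    {ι : Type*} {L : Filter ι} {u v : ι → ℝ} (hu : Tendsto u L (𝓝[>] 0))
    (hv : ∀ i, v i ∈ Ioo (0 : ℝ) 1) (huv : ∀ l > (1 : ℝ), ∀ᶠ i in L, u i ^ l ≤ v i) :
    ∀ᶠ i in L, s α (u i) ≤ s β (v i) := by
  obtain ⟨l, hl, hle⟩ := hs.exists_eventually_le_rpow hβ hαβ
  filter_upwards [hu.eventually hle, hu.eventually (Ioo_mem_nhdsGT one_pos), huv l hl]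
    with i hi hui huvi
  exact hi.trans (hs.2.1 β hβ
    ⟨Real.rpow_pos_of_pos hui.1 l, Real.rpow_lt_one hui.1.le hui.2 (by linarith)⟩ (hv i) huvi)

end IsScaling

theorem iSup_ofReal_le_iSup_ofReal {P Q : ℝ → Prop}
    (h : ∀ α β, 0 < β → β < α → P α → Q β) :
    ⨆ (α : ℝ) (_ : 0 < α ∧ P α), ENNReal.ofReal α ≤
      ⨆ (β : ℝ) (_ : 0 < β ∧ Q β), ENNReal.ofReal β := by
  refine iSup₂_le fun α ⟨hα, hP⟩ => ENNReal.le_of_forall_nnreal_lt fun r hr => ?_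
  rcases eq_zero_or_pos r with rfl | hr0
  · exact zero_le
  have hrα : (r : ℝ) < α := by
    rwa [← ENNReal.ofReal_coe_nnreal, ENNReal.ofReal_lt_ofReal_iff hα] at hr
  exact le_iSup₂_of_le (r : ℝ) ⟨hr0, h α r hr0 hrα hP⟩ (ENNReal.ofReal_coe_nnreal).ge

theorem iInf_ofReal_le_iInf_ofReal {P Q : ℝ → Prop}
    (h : ∀ α β, 0 < β → β < α → Q β → P α) :
    ⨅ (α : ℝ) (_ : 0 < α ∧ P α), ENNReal.ofReal α ≤
      ⨅ (β : ℝ) (_ : 0 < β ∧ Q β), ENNReal.ofReal β := by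
  refine le_iInf₂ fun β ⟨hβ, hQ⟩ => ENNReal.le_of_forall_pos_le_add fun ε hε _ => ?_
  have hβε : β < β + ε := lt_add_of_pos_right β hε
  refine iInf₂_le_of_le (β + ε) ⟨hβ.trans hβε, h _ β hβ hβε hQ⟩ ?_
  rw [ENNReal.ofReal_add hβ.le ε.coe_nonneg, ENNReal.ofReal_coe_nnreal]

theorem exists_index_tendsto_atTop {u : ℕ → ℝ} (hu0 : ∀ j, 0 < u j)
    (hu : Tendsto u atTop (𝓝 0)) :
    ∃ J : ℝ → ℕ, Tendsto J (𝓝[>] 0) atTop ∧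
      ∀ᶠ η in 𝓝[>] 0, u (J η + 1) < η ∧ η ≤ u (J η) := by
  have hbdd : ∀ η > 0, BddAbove {j | η ≤ u j} := fun η hη => by
    obtain ⟨N, hN⟩ := eventually_atTop.1 (hu.eventually_lt_const hη)
    exact ⟨N, fun j hj => not_lt.1 fun hNj => (hN j hNj.le).not_ge hj⟩
  refine ⟨fun η => sSup {j | η ≤ u j}, tendsto_atTop.2 fun n => ?_, ?_⟩
  · filter_upwards [Ioc_mem_nhdsGT (hu0 n)] with η hη using le_csSup (hbdd η hη.1) hη.2
  · filter_upwards [Ioc_mem_nhdsGT (hu0 0)] with η hη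
    have hmem : η ≤ u (sSup {j | η ≤ u j}) := Nat.sSup_mem ⟨0, hη.2⟩ (hbdd η hη.1)
    refine ⟨not_le.1 fun h => ?_, hmem⟩
    exact (Nat.lt_succ_self _).not_ge (le_csSup (hbdd η hη.1) h)

/-- `N` is bounded by `Q + 1` up to a change of scale `ρ j ↦ δ j`; since `ρ j ^ l ≤ δ (j + 1)`
for every `l > 1`, no scaling can tell the two scales apart. -/
structure ScaleLadder (N Q : ℝ → ℝ≥0∞) where
  ρ : ℕ → ℝ
  δ : ℕ → ℝ
  ρ_mem : ∀ j, ρ j ∈ Ioo (0 : ℝ) 1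
  δ_mem : ∀ j, δ j ∈ Ioo (0 : ℝ) 1
  tendsto_ρ : Tendsto ρ atTop (𝓝 0)
  tendsto_δ : Tendsto δ atTop (𝓝 0)
  eventually_rpow_le : ∀ l > (1 : ℝ), ∀ᶠ j in atTop, ρ j ^ l ≤ δ (j + 1)
  le_add_one : ∀ j η, ρ j ≤ η → N η ≤ Q (δ j) + 1

namespace ScaleLadder

variable {N Q : ℝ → ℝ≥0∞} {s : ℝ → ℝ → ℝ} {α β : ℝ}

theorem tendsto_ρ_nhdsGT (L : ScaleLadder N Q) : Tendsto L.ρ atTop (𝓝[>] 0) :=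
  tendsto_nhdsWithin_iff.2 ⟨L.tendsto_ρ, Eventually.of_forall fun j => (L.ρ_mem j).1⟩

theorem tendsto_δ_nhdsGT (L : ScaleLadder N Q) : Tendsto L.δ atTop (𝓝[>] 0) :=
  tendsto_nhdsWithin_iff.2 ⟨L.tendsto_δ, Eventually.of_forall fun j => (L.δ_mem j).1⟩

theorem eventually_scaling_le (L : ScaleLadder N Q) (hs : IsScaling s) (hβ : 0 < β)
    (hαβ : β < α) :
    ∀ᶠ j in atTop, s α (L.ρ j) ≤ s β (L.δ (j + 1)) :=
  hs.eventually_le_of_rpow_le hβ hαβ L.tendsto_ρ_nhdsGT (fun j => L.δ_mem (j + 1))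
    L.eventually_rpow_le

theorem tendsto_mul_scaling_zero (L : ScaleLadder N Q) (hs : IsScaling s) (hβ : 0 < β)
    (hαβ : β < α)
    (hQ : Tendsto (fun ε => Q ε * ENNReal.ofReal (s β ε)) (𝓝[>] 0) (𝓝 0)) :
    Tendsto (fun η => N η * ENNReal.ofReal (s α η)) (𝓝[>] 0) (𝓝 0) := by
  obtain ⟨J, hJ, hJη⟩ := exists_index_tendsto_atTop (fun j => (L.ρ_mem j).1) L.tendsto_ρ
  have hbound : Tendsto (fun j => Q (L.δ j) * ENNReal.ofReal (s β (L.δ j)) +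
      ENNReal.ofReal (s β (L.δ j))) atTop (𝓝 0) := by
    simpa using (hQ.comp L.tendsto_δ_nhdsGT).add
      ((hs.tendsto_ofReal_zero hβ).comp L.tendsto_δ_nhdsGT)
  refine tendsto_of_tendsto_of_tendsto_of_le_of_le' tendsto_const_nhds
    ((hbound.comp (tendsto_add_atTop_nat 1)).comp hJ) (Eventually.of_forall fun _ => zero_le) ?_
  filter_upwards [hJη, hJ.eventually (L.eventually_scaling_le hs hβ hαβ),
    Ioo_mem_nhdsGT one_pos] with η ⟨hlo, hhi⟩ hscale hη
  calc N η * ENNReal.ofReal (s α η)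
      ≤ (Q (L.δ (J η + 1)) + 1) * ENNReal.ofReal (s β (L.δ (J η + 1))) := by
        gcongr
        · exact L.le_add_one _ _ hlo.le
        · exact (hs.2.1 α (hβ.trans hαβ) hη (L.ρ_mem _) hhi).trans hscale
    _ = _ := by rw [add_mul, one_mul]; rfl

theorem tendsto_mul_scaling_top (L : ScaleLadder N Q) (hQ : Antitone Q) (hs : IsScaling s)
    (hβ : 0 < β) (hαβ : β < α)
    (hN : Tendsto (fun η => N η * ENNReal.ofReal (s α η)) (𝓝[>] 0) (𝓝 ⊤)) :
    Tendsto (fun ε => Q ε * ENNReal.ofReal (s β ε)) (𝓝[>] 0) (𝓝 ⊤) := by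
  obtain ⟨J, hJ, hJε⟩ := exists_index_tendsto_atTop (fun j => (L.δ_mem j).1) L.tendsto_δ
  have hsum : Tendsto (fun ε => Q ε * ENNReal.ofReal (s β ε) + ENNReal.ofReal (s β ε))
      (𝓝[>] 0) (𝓝 ⊤) := by
    refine tendsto_nhds_top_mono ((hN.comp L.tendsto_ρ_nhdsGT).comp hJ) ?_
    filter_upwards [hJε, hJ.eventually (L.eventually_scaling_le hs hβ hαβ),
      Ioo_mem_nhdsGT one_pos] with ε ⟨hlo, hhi⟩ hscale hε
    calc N (L.ρ (J ε)) * ENNReal.ofReal (s α (L.ρ (J ε)))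
        ≤ (Q (L.δ (J ε)) + 1) * ENNReal.ofReal (s β (L.δ (J ε + 1))) := by
          gcongr
          exact L.le_add_one _ _ le_rfl
      _ ≤ (Q ε + 1) * ENNReal.ofReal (s β ε) := by
          gcongr
          · exact hQ hhi
          · exact hs.2.1 β hβ (L.δ_mem _) hε hlo.le
      _ = _ := by rw [add_mul, one_mul]
  simpa [ENNReal.add_sub_cancel_right ENNReal.ofReal_ne_top] using
    ENNReal.Tendsto.sub hsum (hs.tendsto_ofReal_zero hβ) (Or.inr ENNReal.zero_ne_top)

end ScaleLadder

section Covering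

variable {X : Type*} [MetricSpace X]

theorem coveringNumber_le_card {F : Set X} {C : Finset X} {r η : ℝ}
    (hF : F ⊆ ⋃ c ∈ C, ball c r) (hη : 2 * r ≤ η) : coveringNumber F η ≤ C.card := by
  classical
  -- the centers of a cover must lie in `F`: move each useful center into `F`, doubling the radius
  let p : X → X := fun c => if h : (F ∩ ball c r).Nonempty then h.some else c
  have hp : ∀ c, (F ∩ ball c r).Nonempty → p c ∈ F ∩ ball c r := fun c h => by
    simp only [p, dif_pos h]; exact h.some_mem
  let t := (C.filter fun c => (F ∩ ball c r).Nonempty).image p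
  have ht : (t : Set X) ⊆ F := by
    intro y hy
    obtain ⟨c, hc, rfl⟩ := Finset.mem_image.1 hy
    exact (hp c (Finset.mem_filter.1 hc).2).1
  have hcover : F ⊆ ⋃ y ∈ t, ball y η := by
    intro x hx
    obtain ⟨c, hc, hxc⟩ := mem_iUnion₂.1 (hF hx)
    have hne : (F ∩ ball c r).Nonempty := ⟨x, hx, hxc⟩
    refine mem_iUnion₂.2 ⟨p c, Finset.mem_image_of_mem p (Finset.mem_filter.2 ⟨hc, hne⟩), ?_⟩
    have hpc := mem_ball.1 (hp c hne).2
    rw [mem_ball] at hxc ⊢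
    linarith [dist_triangle_right x (p c) c]
  refine (iInf₂_le t ⟨ht, hcover⟩).trans ?_
  exact_mod_cast Finset.card_image_le.trans (Finset.card_filter_le _ _)

end Covering

section Quantization

variable {X : Type*} [MetricSpace X] [MeasurableSpace X]

theorem quantizationNumber_antitone (μ : Measure X) : Antitone (quantizationNumber μ) :=
  fun _ _ h => le_iInf₂ fun t ht => iInf₂_le t (ht.trans (ENNReal.ofReal_le_ofReal h))

theorem exists_finset_lintegral_infEDist_le (μ : Measure X) {δ : ℝ}
    (hQ : quantizationNumber μ δ ≠ ⊤) :
    ∃ C : Finset X, ∫⁻ x, infEDist x C ∂μ ≤ ENNReal.ofReal δ ∧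
      (C.card : ℝ≥0∞) ≤ quantizationNumber μ δ + 1 := by
  obtain ⟨C, hC⟩ := iInf_lt_iff.1 (ENNReal.lt_add_right hQ one_ne_zero)
  obtain ⟨hint, hcard⟩ := iInf_lt_iff.1 hC
  exact ⟨C, hint, hcard.le⟩

theorem exists_measurableSet_coveringNumber_le [OpensMeasurableSpace X] (μ : Measure X)
    {δ r : ℝ} (hr : 0 < r) :
    ∃ G : Set X, MeasurableSet G ∧ μ Gᶜ ≤ ENNReal.ofReal (δ / r) ∧
      ∀ F ⊆ G, ∀ η, 2 * r ≤ η → coveringNumber F η ≤ quantizationNumber μ δ + 1 := by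
  by_cases hQ : quantizationNumber μ δ = ⊤
  · exact ⟨univ, .univ, by simp, fun F _ η _ => by simp [hQ]⟩
  obtain ⟨C, hC, hcard⟩ := exists_finset_lintegral_infEDist_le μ hQ
  have hd : Continuous fun x => infEDist x (C : Set X) := continuous_infEDist
  refine ⟨{x | infEDist x C < ENNReal.ofReal r}, measurableSet_lt hd.measurable measurable_const,
    ?_, fun F hF η hη => ((coveringNumber_le_card (fun x hx => ?_) hη).trans hcard)⟩
  · have hr' : ENNReal.ofReal r ≠ 0 := (ENNReal.ofReal_pos.2 hr).ne'
    calc μ {x | infEDist x C < ENNReal.ofReal r}ᶜ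
        = μ {x | ENNReal.ofReal r ≤ infEDist x C} := by simp only [compl_ofPred, not_lt]
      _ ≤ (∫⁻ x, infEDist x C ∂μ) / ENNReal.ofReal r :=
          meas_ge_le_lintegral_div hd.measurable.aemeasurable hr' ENNReal.ofReal_ne_top
      _ ≤ ENNReal.ofReal δ / ENNReal.ofReal r := by gcongr
      _ = ENNReal.ofReal (δ / r) := (ENNReal.ofReal_div_of_pos hr).symm
  · obtain ⟨c, hc, hxc⟩ := infEDist_lt_iff.1 (hF hx)
    exact mem_iUnion₂.2 ⟨c, hc, edist_lt_ofReal.1 hxc⟩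

end Quantization

theorem tsum_ofReal_pow_succ_le {a : ℝ} (ha0 : 0 ≤ a) (ha : a ≤ 1 / 2) :
    ∑' j : ℕ, ENNReal.ofReal (a ^ (j + 1)) ≤ ENNReal.ofReal (2 * a) := by
  have ha1 : a < 1 := by linarith
  have hsum : Summable fun j : ℕ => a ^ (j + 1) := by
    simpa only [pow_succ'] using (summable_geometric_of_lt_one ha0 ha1).mul_left a
  rw [← ENNReal.ofReal_tsum_of_nonneg (fun j => pow_nonneg ha0 _) hsum]
  refine ENNReal.ofReal_le_ofReal ?_
  have h2 : (1 - a)⁻¹ ≤ 2 := by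
    rw [inv_le_comm₀ (by linarith) two_pos]
    linarith
  calc ∑' j : ℕ, a ^ (j + 1) = a * (1 - a)⁻¹ := by
        simp only [pow_succ', tsum_mul_left, tsum_geometric_of_lt_one ha0 ha1]
    _ ≤ 2 * a := by nlinarith

/-- Exponents grow quadratically, so any power `l > 1` of a radius is eventually far below the
next radius. -/
def ladderRadius (a : ℝ) (j : ℕ) : ℝ := a ^ ((j + 1) * (j + 3) + 1)

section LadderRadius

variable {a : ℝ}

theorem ladderRadius_pos (ha0 : 0 < a) (j : ℕ) : 0 < ladderRadius a j := pow_pos ha0 _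

theorem two_mul_ladderRadius_le (ha0 : 0 < a) (ha : a ≤ 1 / 2) (j : ℕ) :
    2 * ladderRadius a j ≤ a ^ ((j + 1) * (j + 3)) := by
  calc 2 * ladderRadius a j = a ^ ((j + 1) * (j + 3)) * (2 * a) := by
        rw [ladderRadius, pow_succ]; ring
    _ ≤ a ^ ((j + 1) * (j + 3)) := mul_le_of_le_one_right (pow_nonneg ha0.le _) (by linarith)

theorem two_mul_ladderRadius_lt_one (ha0 : 0 < a) (ha : a ≤ 1 / 2) (j : ℕ) :
    2 * ladderRadius a j < 1 :=
  (two_mul_ladderRadius_le ha0 ha j).trans_lt (pow_lt_one₀ ha0.le (by linarith) (by positivity))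

theorem tendsto_ladderRadius (ha0 : 0 < a) (ha : a ≤ 1 / 2) :
    Tendsto (ladderRadius a) atTop (𝓝 0) :=
  squeeze_zero (fun j => (ladderRadius_pos ha0 j).le)
    (fun j => pow_le_pow_of_le_one ha0.le (by linarith) (by nlinarith))
    (tendsto_pow_atTop_nhds_zero_of_lt_one ha0.le (by linarith))

theorem eventually_two_mul_ladderRadius_rpow_le (ha0 : 0 < a) (ha : a ≤ 1 / 2) {l : ℝ}
    (hl : 1 < l) :
    ∀ᶠ j in atTop, (2 * ladderRadius a j) ^ l ≤ ladderRadius a (j + 1) * a ^ (j + 2) := by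
  have hlarge : ∀ᶠ j : ℕ in atTop, 11 ≤ (l - 1) * j :=
    (tendsto_natCast_atTop_atTop.const_mul_atTop (by linarith)).eventually_ge_atTop 11
  filter_upwards [hlarge, eventually_ge_atTop 1] with j hj hj1
  have hj1' : (1 : ℝ) ≤ j := by exact_mod_cast hj1
  have hexp : (((j + 2) * (j + 4) + 1 + (j + 2) : ℕ) : ℝ) ≤ ((j + 1) * (j + 3) : ℕ) * l := by
    push_cast
    nlinarith
  calc (2 * ladderRadius a j) ^ l ≤ (a ^ ((j + 1) * (j + 3))) ^ l :=
        Real.rpow_le_rpow (by positivity [ladderRadius_pos ha0 j])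
          (two_mul_ladderRadius_le ha0 ha j) (by linarith)
    _ = a ^ ((((j + 1) * (j + 3) : ℕ) : ℝ) * l) := by
        rw [← Real.rpow_natCast, ← Real.rpow_mul ha0.le]
    _ ≤ a ^ ((((j + 2) * (j + 4) + 1 + (j + 2) : ℕ) : ℝ)) :=
        Real.rpow_le_rpow_of_exponent_ge ha0 (by linarith) hexp
    _ = ladderRadius a (j + 1) * a ^ (j + 2) := by
        rw [Real.rpow_natCast, ladderRadius, ← pow_add]

end LadderRadius

theorem exists_posMeasure_scaleLadder {X : Type*} [MetricSpace X] [MeasurableSpace X]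
    [OpensMeasurableSpace X] (μ : Measure X) (hμ : μ ≠ 0) :
    ∃ F : Set X, MeasurableSet F ∧ 0 < μ F ∧
      Nonempty (ScaleLadder (coveringNumber F) (quantizationNumber μ)) := by
  obtain ⟨a, ⟨ha0, ha⟩, hμa⟩ : ∃ a : ℝ, a ∈ Ioc 0 (1 / 2) ∧ ENNReal.ofReal (2 * a) < μ univ := by
    have h2a : Tendsto (fun a : ℝ => 2 * a) (𝓝[>] 0) (𝓝 0) := by
      simpa using ((tendsto_id (x := 𝓝 (0 : ℝ))).const_mul 2).mono_left nhdsWithin_le_nhds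
    have hofReal := ENNReal.tendsto_ofReal h2a
    rw [ENNReal.ofReal_zero] at hofReal
    exact (Filter.Eventually.and (Ioc_mem_nhdsGT (by norm_num))
      (hofReal.eventually_lt_const (Measure.measure_univ_pos.2 hμ))).exists
  have hr := ladderRadius_pos ha0
  let δ : ℕ → ℝ := fun j => ladderRadius a j * a ^ (j + 1)
  have hδr : ∀ j, δ j ≤ ladderRadius a j := fun j =>
    mul_le_of_le_one_right (hr j).le (pow_le_one₀ ha0.le (by linarith))
  choose G hGm hGμ hGcov using fun j => exists_measurableSet_coveringNumber_le μ (δ := δ j) (hr j)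
  have hcompl : μ (⋂ j, G j)ᶜ < μ univ := calc
    μ (⋂ j, G j)ᶜ ≤ ∑' j, μ (G j)ᶜ := by rw [compl_iInter]; exact measure_iUnion_le _
    _ ≤ ∑' j, ENNReal.ofReal (a ^ (j + 1)) := by
        refine ENNReal.tsum_le_tsum fun j => (hGμ j).trans_eq ?_
        rw [mul_div_cancel_left₀ _ (hr j).ne']
    _ ≤ ENNReal.ofReal (2 * a) := tsum_ofReal_pow_succ_le ha0.le ha
    _ < μ univ := hμa
  refine ⟨⋂ j, G j, .iInter hGm, pos_iff_ne_zero.2 fun h0 => ?_, ⟨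
    { ρ := fun j => 2 * ladderRadius a j
      δ := δ
      ρ_mem := fun j => ⟨by positivity [hr j], two_mul_ladderRadius_lt_one ha0 ha j⟩
      δ_mem := fun j => ⟨by positivity [hr j], (hδr j).trans_lt
        (lt_of_le_of_lt (by linarith [hr j]) (two_mul_ladderRadius_lt_one ha0 ha j))⟩
      tendsto_ρ := by simpa using (tendsto_ladderRadius ha0 ha).const_mul 2
      tendsto_δ := squeeze_zero (fun j => by positivity [hr j]) hδr (tendsto_ladderRadius ha0 ha)
      eventually_rpow_le := fun l hl => eventually_two_mul_ladderRadius_rpow_le ha0 ha hl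
      le_add_one := fun j => hGcov j _ (iInter_subset G j) }⟩⟩
  have := measure_univ_le_add_compl (μ := μ) (⋂ j, G j)
  rw [h0, zero_add] at this
  exact hcompl.not_ge this

/-- For a non-null Borel measure `μ` there is a Borel set `F` of positive measure whose
box scales are bounded by the quantization scales of `μ`; in particular the box scales
of `μ` are at most its quantization scales. -/
theorem exists_posMeasure_set_boxScale_le_quantScale
    {X : Type*} [MetricSpace X] [MeasurableSpace X] [BorelSpace X]
    (μ : Measure X) (hμ : μ ≠ 0) (s : ℝ → ℝ → ℝ) (hs : IsScaling s) :
    (∃ F : Set X, MeasurableSet F ∧ 0 < μ F ∧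
      lowerBoxScale s F ≤ lowerQuantScale s μ ∧ upperBoxScale s F ≤ upperQuantScale s μ) ∧
    measureScale (lowerBoxScale s) μ ≤ lowerQuantScale s μ ∧
    measureScale (upperBoxScale s) μ ≤ upperQuantScale s μ := by
  obtain ⟨F, hFm, hμF, ⟨L⟩⟩ := exists_posMeasure_scaleLadder μ hμ
  have hlower : lowerBoxScale s F ≤ lowerQuantScale s μ :=
    iSup_ofReal_le_iSup_ofReal fun _ _ hβ hαβ =>
      L.tendsto_mul_scaling_top (quantizationNumber_antitone μ) hs hβ hαβ
  have hupper : upperBoxScale s F ≤ upperQuantScale s μ :=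
    iInf_ofReal_le_iInf_ofReal fun _ _ hβ hαβ => L.tendsto_mul_scaling_zero hs hβ hαβ
  have hF : MeasurableSet F ∧ 0 < μ F := ⟨hFm, hμF⟩
  exact ⟨⟨F, hFm, hμF, hlower, hupper⟩, (iInf₂_le F hF).trans hlower, (iInf₂_le F hF).trans hupper⟩
end
end

section
/- For any integers p, q ≥ 1, the family scl^{p,q} = (scl^{p,q}_α)_{α>0} defined by scl^{p,q}_α(ε) = 1 / exp^{∘p}(α · log_+^{∘q}(ε^{−1})) for ε ∈ (0,1), where exp^{∘p} is the p-fold iterate of exp, log_+ (t) = log(t) for t > 1 and 0 otherwise, and log_+^{∘q} is its q-fold iterate, is a scaling. -/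
open Filter MeasureTheory Metric Set
open scoped ENNReal Topology NNReal

noncomputable section

private def logp (t : ℝ) : ℝ := max (Real.log t) 0

private lemma lp_nonneg (t : ℝ) : 0 ≤ logp t := le_max_right _ _

private lemma lp_mono {s t : ℝ} (h0 : 0 ≤ s) (h : s ≤ t) : logp s ≤ logp t := by
  rcases le_or_gt s 1 with h1 | h1
  · calc logp s = 0 := max_eq_right (Real.log_nonpos h0 h1)
    _ ≤ logp t := lp_nonneg t
  · exact max_le_max (Real.log_le_log (by linarith) h) le_rfl

private lemma lpIter_mono : ∀ (n : ℕ) {s t : ℝ}, 0 ≤ s → s ≤ t → logp^[n] s ≤ logp^[n] t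
  | 0, _, _, _, h => h
  | (n+1), s, t, h0, h => by
    rw [Function.iterate_succ_apply, Function.iterate_succ_apply]
    exact lpIter_mono n (lp_nonneg _) (lp_mono h0 h)

private lemma lp_tendsto : Tendsto logp atTop atTop :=
  tendsto_atTop_mono (fun t => le_max_left _ _) Real.tendsto_log_atTop

private lemma lpIter_tendsto (n : ℕ) : Tendsto (logp^[n]) atTop atTop := by
  induction n with
  | zero => simpa using (tendsto_id : Tendsto (id : ℝ → ℝ) atTop atTop)
  | succ m ih => rw [Function.iterate_succ]; exact ih.comp lp_tendsto

private lemma lpIter_mul : ∀ (n : ℕ) {l : ℝ}, 1 < l →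
    ∀ᶠ m : ℝ in atTop, logp^[n] (l * m) ≤ l * logp^[n] m
  | 0, l, _ => Eventually.of_forall fun m => le_rfl
  | (n+1), l, hl => by
    have h1 : ∀ᶠ m : ℝ in atTop, logp (l * m) ≤ l * logp m := by
      filter_upwards [eventually_ge_atTop (1:ℝ),
        Real.tendsto_log_atTop.eventually_ge_atTop (Real.log l / (l - 1))] with m hm hlog
      have hm0 : (0:ℝ) < m := by linarith
      have hl0 : (0:ℝ) < l := by linarith
      have hlogl : Real.log l ≤ (l - 1) * Real.log m := by
        rw [div_le_iff₀ (by linarith)] at hlog; linarith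
      have hlogm : 0 ≤ Real.log m := Real.log_nonneg hm
      have hlogl0 : 0 ≤ Real.log l := Real.log_nonneg hl.le
      have hlm : logp (l * m) = Real.log l + Real.log m := by
        simp only [logp]
        rw [Real.log_mul (ne_of_gt hl0) (ne_of_gt hm0)]
        exact max_eq_left (by linarith)
      have hlpm : logp m = Real.log m := max_eq_left hlogm
      rw [hlm, hlpm]
      linarith
    have ih := lpIter_mul n hl
    filter_upwards [h1, lp_tendsto.eventually ih] with m h1m hihm
    rw [Function.iterate_succ_apply, Function.iterate_succ_apply]
    calc logp^[n] (logp (l * m)) ≤ logp^[n] (l * logp m) := lpIter_mono n (lp_nonneg _) h1m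
    _ ≤ l * logp^[n] (logp m) := hihm

private lemma expIter_pos {p : ℕ} (hp : 1 ≤ p) (x : ℝ) : 0 < Real.exp^[p] x := by
  obtain ⟨r, rfl⟩ : ∃ r, p = r + 1 := ⟨p - 1, (Nat.succ_pred_eq_of_pos hp).symm⟩
  rw [Function.iterate_succ_apply']
  exact Real.exp_pos _

private lemma expIter_mono (p : ℕ) : Monotone (Real.exp^[p]) :=
  Real.exp_monotone.iterate p

private lemma le_expIter (p : ℕ) (x : ℝ) : x ≤ Real.exp^[p] x := by
  induction p with
  | zero => simp
  | succ r ih =>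
    rw [Function.iterate_succ_apply']
    calc x ≤ Real.exp^[r] x := ih
    _ ≤ Real.exp (Real.exp^[r] x) := by linarith [Real.add_one_le_exp (Real.exp^[r] x)]

private lemma sub_le_exp_sub {u v : ℝ} (hv : 0 ≤ v) (huv : v ≤ u) :
    u - v ≤ Real.exp u - Real.exp v := by
  have h1 : Real.exp u = Real.exp v * Real.exp (u - v) := by
    rw [← Real.exp_add]; ring_nf
  nlinarith [Real.add_one_le_exp (u - v), Real.one_le_exp hv, Real.exp_pos v]

private lemma diff_tendsto (p : ℕ) {a b : ℝ} (ha : 0 < a) (hab : a < b) :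
    Tendsto (fun x => Real.exp^[p] (b * x) - Real.exp^[p] (a * x)) atTop atTop := by
  induction p with
  | zero =>
    simpa using (tendsto_id.const_mul_atTop (sub_pos.2 hab)).congr
      (fun x => by simp [Function.iterate_zero]; ring)
  | succ r ih =>
    refine tendsto_atTop_mono' atTop ?_ ih
    filter_upwards [eventually_ge_atTop (0:ℝ)] with x hx
    rw [Function.iterate_succ_apply', Function.iterate_succ_apply']
    have hv : 0 ≤ Real.exp^[r] (a * x) := le_trans (by positivity) (le_expIter r _)
    have huv : Real.exp^[r] (a * x) ≤ Real.exp^[r] (b * x) :=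
      expIter_mono r (by nlinarith)
    linarith [sub_le_exp_sub hv huv]

private lemma ratio_tendsto {p : ℕ} (hp : 1 ≤ p) {a b : ℝ} (ha : 0 < a) (hab : a < b) :
    Tendsto (fun x => Real.exp^[p] (a * x) / Real.exp^[p] (b * x)) atTop (𝓝 0) := by
  obtain ⟨r, rfl⟩ : ∃ r, p = r + 1 := ⟨p - 1, (Nat.succ_pred_eq_of_pos hp).symm⟩
  have hdiff : Tendsto (fun x => Real.exp^[r] (a * x) - Real.exp^[r] (b * x)) atTop atBot := by
    have h := tendsto_neg_atTop_atBot.comp (diff_tendsto r ha hab)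
    refine h.congr fun x => ?_
    simp [Function.comp]
  have h := Real.tendsto_exp_atBot.comp hdiff
  refine h.congr fun x => ?_
  simp only [Function.comp, Function.iterate_succ_apply', Real.exp_sub]

private lemma eventually_mul_le (r : ℕ) {a l : ℝ} (ha : 0 < a) (hl : 1 < l) :
    ∀ᶠ x in atTop, l * Real.exp^[r] (a * x) ≤ Real.exp^[r] (l * a * x) := by
  rcases Nat.eq_zero_or_pos r with rfl | hr
  · exact Eventually.of_forall fun x => le_of_eq (by simp [mul_assoc])
  · have h := ratio_tendsto hr ha (by nlinarith : a < l * a)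
    have h2 := h.eventually (gt_mem_nhds (by positivity : (0:ℝ) < 1 / l))
    filter_upwards [h2] with x hx
    have hd : 0 < Real.exp^[r] (l * a * x) := expIter_pos hr _
    rw [div_lt_div_iff₀ hd (by linarith : (0:ℝ) < l)] at hx
    linarith [hx]

private lemma eventually_rpow_le {p : ℕ} (hp : 1 ≤ p) {a l : ℝ} (ha : 0 < a) (hl : 1 < l) :
    ∀ᶠ x in atTop, (Real.exp^[p] (a * x)) ^ l ≤ Real.exp^[p] (l * a * x) := by
  obtain ⟨r, rfl⟩ : ∃ r, p = r + 1 := ⟨p - 1, (Nat.succ_pred_eq_of_pos hp).symm⟩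
  filter_upwards [eventually_mul_le r ha hl] with x hx
  rw [Function.iterate_succ_apply', Function.iterate_succ_apply',
    Real.rpow_def_of_pos (Real.exp_pos _), Real.log_exp]
  exact Real.exp_le_exp.2 (by rw [mul_comm]; exact hx)

private lemma inv_div_inv' (a b : ℝ) : a⁻¹ / b⁻¹ = b / a := by
  rw [div_eq_mul_inv, inv_inv, mul_comm, ← div_eq_mul_inv]

/-- For any integers `p, q ≥ 1` the family
`scl^{p,q}_α(ε) = 1 / exp^{∘p}(α · log₊^{∘q}(ε⁻¹))` is a scaling. -/
theorem isScaling_iteratedExpLog (p q : ℕ) (hp : 1 ≤ p) (hq : 1 ≤ q) :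
    IsScaling (fun α ε => (Real.exp^[p] (α * (fun t : ℝ => max (Real.log t) 0)^[q] ε⁻¹))⁻¹) := by
  have hfun : (fun t : ℝ => max (Real.log t) 0) = logp := rfl
  rw [hfun]
  refine ⟨?_, ?_, ?_⟩
  · intro α hα ε hε
    exact inv_pos.2 (expIter_pos hp _)
  · intro α hα x hx y hy hxy
    have hL : logp^[q] y⁻¹ ≤ logp^[q] x⁻¹ :=
      lpIter_mono q (inv_nonneg.2 hy.1.le) (inv_anti₀ hx.1 hxy)
    exact inv_anti₀ (expIter_pos hp _)
      (expIter_mono p (mul_le_mul_of_nonneg_left hL hα.le))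
  · intro α β hβ hab
    refine ⟨α / β, (one_lt_div hβ).2 hab, fun l hl => ?_⟩
    obtain ⟨hl1, hl2⟩ := hl
    have hlβ : l * β < α := (lt_div_iff₀ hβ).1 hl2
    have hlβ0 : 0 < l * β := by positivity
    have hinv : Tendsto (fun ε : ℝ => ε⁻¹) (𝓝[>] (0:ℝ)) atTop := tendsto_inv_nhdsGT_zero
    have hLt : Tendsto (fun ε : ℝ => logp^[q] ε⁻¹) (𝓝[>] (0:ℝ)) atTop :=
      (lpIter_tendsto q).comp hinv
    have key : Tendsto (fun ε : ℝ =>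
        Real.exp^[p] (l * β * logp^[q] ε⁻¹) / Real.exp^[p] (α * logp^[q] ε⁻¹))
        (𝓝[>] (0:ℝ)) (𝓝 0) := (ratio_tendsto hp hlβ0 hlβ).comp hLt
    constructor
    · -- first limit : s α ε / s β (ε ^ l) → 0
      refine squeeze_zero' ?_ ?_ key
      · filter_upwards with ε
        exact div_nonneg (inv_nonneg.2 (expIter_pos hp _).le)
          (inv_nonneg.2 (expIter_pos hp _).le)
      · obtain ⟨q', rfl⟩ : ∃ q', q = q' + 1 := ⟨q - 1, (Nat.succ_pred_eq_of_pos hq).symm⟩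
        have hA : ∀ᶠ ε : ℝ in 𝓝[>] (0:ℝ),
            logp^[q' + 1] ((ε ^ l)⁻¹) ≤ l * logp^[q' + 1] ε⁻¹ := by
          filter_upwards [self_mem_nhdsWithin, hinv.eventually (eventually_ge_atTop (1:ℝ)),
            (lp_tendsto.comp hinv).eventually (lpIter_mul q' hl1)] with ε hε h1 hmm
          have hε0 : (0:ℝ) < ε := hε
          have hpow : (ε ^ l)⁻¹ = (ε⁻¹) ^ l := (Real.inv_rpow hε0.le l).symm
          have hlog : 0 ≤ Real.log ε⁻¹ := Real.log_nonneg h1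
          have hlp1 : logp ((ε⁻¹) ^ l) = l * logp ε⁻¹ := by
            simp only [logp]
            rw [Real.log_rpow (by positivity), max_eq_left hlog,
              max_eq_left (by positivity)]
          rw [hpow, Function.iterate_succ_apply, Function.iterate_succ_apply, hlp1]
          exact hmm
        filter_upwards [hA] with ε hAε
        have e1 : Real.exp^[p] (β * logp^[q' + 1] (ε ^ l)⁻¹)
            ≤ Real.exp^[p] (l * β * logp^[q' + 1] ε⁻¹) :=
          expIter_mono p (by nlinarith)
        rw [inv_div_inv']
        exact div_le_div₀ (expIter_pos hp _).le e1 (expIter_pos hp _) le_rfl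
    · -- second limit : s α ε / (s β ε) ^ l → 0
      refine squeeze_zero' ?_ ?_ key
      · filter_upwards with ε
        exact div_nonneg (inv_nonneg.2 (expIter_pos hp _).le)
          (Real.rpow_nonneg (inv_nonneg.2 (expIter_pos hp _).le) l)
      · filter_upwards [hLt.eventually (eventually_rpow_le hp hβ hl1)] with ε hε
        rw [Real.inv_rpow (expIter_pos hp _).le, inv_div_inv']
        exact div_le_div₀ (expIter_pos hp _).le hε (expIter_pos hp _) le_rfl

end
end

section
/- Let scl be a scaling, f : (0,∞) → (0,∞) a non-increasing function, and (r_n)_{n≥1} a positive sequence decreasing to 0 such that log r_{n+1} / log r_n → 1 as n → ∞. Then inf{α > 0 : f(ε)·scl_α(ε) → 0 as ε → 0} = inf{α > 0 : f(r_n)·scl_α(r_n) → 0 as n → ∞} and sup{α > 0 : f(ε)·scl_α(ε) → +∞ as ε → 0} = sup{α > 0 : f(r_n)·scl_α(r_n) → +∞ as n → ∞}. -/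
open Filter MeasureTheory Metric Set
open scoped ENNReal Topology NNReal

noncomputable section

/-! The continuous and sequential exponents agree because every small `ε` lies in some
`(r (n+1), r n]`, and `r n ^ l < r (n+1)` for any `l > 1` once `n` is large (this is the
hypothesis on `log r (n+1) / log r n`). The scaling axiom then gives
`s β (r n) ≤ s α (r n ^ l) ≤ s α (r (n+1))` for `α < β`, so on that interval
`f ε * s β ε` is compared with values of `n ↦ f (r n) * s α (r n)` along the sequence,
at the cost of an arbitrarily small change of exponent, which the infimum and supremum
do not see. -/

theorem eventually_nhdsGT_zero_of_forall_Ioc {r : ℕ → ℝ} (hrpos : ∀ n, 0 < r n)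
    (hr0 : Tendsto r atTop (𝓝 0)) {p : ℝ → Prop}
    (h : ∀ᶠ n in atTop, ∀ ε ∈ Ioc (r (n + 1)) (r n), p ε) :
    ∀ᶠ ε in 𝓝[>] 0, p ε := by
  obtain ⟨N, hN⟩ := eventually_atTop.1 h
  filter_upwards [Ioo_mem_nhdsGT (hrpos N)] with ε ⟨hε, hεN⟩
  obtain ⟨m, hm, hεm⟩ : ∃ m, N ≤ m ∧ r (m + 1) < ε ∧ ε ≤ r m := by
    by_contra! hcross
    have hle : ∀ m, N ≤ m → ε ≤ r m := fun m hm =>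
      Nat.le_induction hεN.le (fun k hk ih => not_lt.1 fun h => (hcross k hk h).not_ge ih) m hm
    obtain ⟨m, hm, hmN⟩ := ((hr0.eventually_lt_const hε).and (eventually_ge_atTop N)).exists
    exact (hle m hmN).not_gt hm
  exact hN m hm ε hεm

section SequentialScale

variable {r : ℕ → ℝ} (hrpos : ∀ n, 0 < r n) (hr0 : Tendsto r atTop (𝓝 0))
  (hrlog : Tendsto (fun n => Real.log (r (n + 1)) / Real.log (r n)) atTop (𝓝 1))
include hrpos hr0 hrlog

theorem eventually_rpow_lt_succ {l : ℝ} (hl : 1 < l) :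
    ∀ᶠ n in atTop, r n ^ l < r (n + 1) := by
  filter_upwards [hrlog.eventually_lt_const hl, hr0.eventually_lt_const one_pos] with n hlog hr1
  have hlog_neg : Real.log (r n) < 0 := Real.log_neg (hrpos n) hr1
  rw [← Real.log_lt_log_iff (Real.rpow_pos_of_pos (hrpos n) l) (hrpos _),
    Real.log_rpow (hrpos n)]
  exact (div_lt_iff_of_neg hlog_neg).1 hlog

variable {s : ℝ → ℝ → ℝ} (hs : IsScaling s) {α β : ℝ}
include hs

theorem eventually_scale_le_scale_succ (hα : 0 < α) (hαβ : α < β) :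
    ∀ᶠ n in atTop, s β (r n) ≤ s α (r (n + 1)) := by
  obtain ⟨l₀, hl₀, hl⟩ := hs.2.2 β α hα hαβ
  obtain ⟨l, hl1, hll₀⟩ := exists_between hl₀
  have hr : Tendsto r atTop (𝓝[>] 0) := tendsto_nhdsWithin_iff.2 ⟨hr0, .of_forall hrpos⟩
  filter_upwards [((hl l ⟨hl1, hll₀⟩).1.comp hr).eventually_lt_const one_pos,
    eventually_rpow_lt_succ hrpos hr0 hrlog hl1,
    (hr0.comp (tendsto_add_atTop_nat 1)).eventually_lt_const one_pos] with n hratio hpow hr1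
  have hmem : r n ^ l ∈ Ioo 0 1 := ⟨Real.rpow_pos_of_pos (hrpos n) l, hpow.trans hr1⟩
  calc s β (r n) ≤ s α (r n ^ l) := ((div_lt_one (hs.1 α hα _ hmem)).1 hratio).le
    _ ≤ s α (r (n + 1)) := hs.2.1 α hα hmem ⟨hrpos _, hr1⟩ hpow.le

variable {f : ℝ → ℝ} (hfpos : ∀ ε ∈ Ioi (0 : ℝ), 0 < f ε) (hf : AntitoneOn f (Ioi 0))
include hfpos hf

theorem tendsto_mul_scale_nhds_zero_of_seq (hα : 0 < α) (hαβ : α < β)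
    (hseq : Tendsto (fun n => f (r n) * s α (r n)) atTop (𝓝 0)) :
    Tendsto (fun ε => f ε * s β ε) (𝓝[>] 0) (𝓝 0) := by
  have hbound : ∀ᶠ n in atTop, ∀ ε ∈ Ioc (r (n + 1)) (r n),
      0 ≤ f ε * s β ε ∧ f ε * s β ε ≤ f (r (n + 1)) * s α (r (n + 1)) := by
    filter_upwards [eventually_scale_le_scale_succ hrpos hr0 hrlog hs hα hαβ,
      hr0.eventually_lt_const one_pos] with n hsn hr1 ε ⟨hε₁, hε₂⟩
    have hε : ε ∈ Ioo 0 1 := ⟨(hrpos _).trans hε₁, hε₂.trans_lt hr1⟩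
    have hsε : 0 ≤ s β ε := (hs.1 β (hα.trans hαβ) ε hε).le
    exact ⟨mul_nonneg (hfpos ε hε.1).le hsε,
      mul_le_mul (hf (hrpos _) hε.1 hε₁.le)
        ((hs.2.1 β (hα.trans hαβ) hε ⟨hrpos n, hr1⟩ hε₂).trans hsn) hsε
        (hfpos _ (hrpos _)).le⟩
  refine tendsto_order.2 ⟨fun a ha => eventually_nhdsGT_zero_of_forall_Ioc hrpos hr0 ?_,
    fun a ha => eventually_nhdsGT_zero_of_forall_Ioc hrpos hr0 ?_⟩
  · exact hbound.mono fun n h ε hε => ha.trans_le (h ε hε).1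
  · filter_upwards [(hseq.comp (tendsto_add_atTop_nat 1)).eventually_lt_const ha, hbound]
      with n hn h ε hε
    exact (h ε hε).2.trans_lt hn

theorem tendsto_mul_scale_atTop_of_seq (hβ : 0 < β) (hβα : β < α)
    (hseq : Tendsto (fun n => f (r n) * s α (r n)) atTop atTop) :
    Tendsto (fun ε => f ε * s β ε) (𝓝[>] 0) atTop := by
  have hbound : ∀ᶠ n in atTop, ∀ ε ∈ Ioc (r (n + 1)) (r n),
      f (r n) * s α (r n) ≤ f ε * s β ε := by
    filter_upwards [eventually_scale_le_scale_succ hrpos hr0 hrlog hs hβ hβα,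
      (hr0.comp (tendsto_add_atTop_nat 1)).eventually_lt_const one_pos,
      hr0.eventually_lt_const one_pos] with n hsn hr1' hr1 ε ⟨hε₁, hε₂⟩
    have hε : ε ∈ Ioo 0 1 := ⟨(hrpos _).trans hε₁, hε₂.trans_lt hr1⟩
    exact mul_le_mul (hf hε.1 (hrpos n) hε₂)
      (hsn.trans (hs.2.1 β hβ ⟨hrpos _, hr1'⟩ hε hε₁.le))
      (hs.1 α (hβ.trans hβα) _ ⟨hrpos n, hr1⟩).le (hfpos ε hε.1).le
  exact tendsto_atTop.2 fun M => eventually_nhdsGT_zero_of_forall_Ioc hrpos hr0 <|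
    ((hseq.eventually_ge_atTop M).and hbound).mono fun n h ε hε => h.1.trans (h.2 ε hε)

end SequentialScale

namespace ENNReal

theorem iInf_ofReal_le_of_forall_gt {p : ℝ → Prop} {a : ℝ} (h : ∀ b, a < b → p b) :
    ⨅ (b : ℝ) (_ : p b), ENNReal.ofReal b ≤ ENNReal.ofReal a :=
  ge_of_tendsto (tendsto_ofReal (tendsto_id.mono_left nhdsWithin_le_nhds) :
      Tendsto ENNReal.ofReal (𝓝[>] a) _)
    (eventually_nhdsWithin_of_forall fun b hb => iInf₂_le b (h b hb))

theorem ofReal_le_iSup_of_forall_lt {p : ℝ → Prop} {a : ℝ} (ha : 0 < a)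
    (h : ∀ b, 0 < b → b < a → p b) :
    ENNReal.ofReal a ≤ ⨆ (b : ℝ) (_ : p b), ENNReal.ofReal b :=
  le_of_tendsto (tendsto_ofReal (tendsto_id.mono_left nhdsWithin_le_nhds) :
      Tendsto ENNReal.ofReal (𝓝[<] a) _)
    (mem_of_superset (Ioo_mem_nhdsLT ha) fun b hb =>
      le_iSup₂ (f := fun b _ => ENNReal.ofReal b) b (h b hb.1 hb.2))

end ENNReal

theorem scale_seq_characterization_general (s : ℝ → ℝ → ℝ) (hs : IsScaling s)
    (f : ℝ → ℝ) (hfpos : ∀ ε ∈ Set.Ioi (0:ℝ), 0 < f ε) (hf : AntitoneOn f (Set.Ioi 0))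
    (r : ℕ → ℝ) (hrpos : ∀ n, 0 < r n)
    (hr0 : Tendsto r atTop (𝓝 0))
    (hrlog : Tendsto (fun n => Real.log (r (n + 1)) / Real.log (r n)) atTop (𝓝 1)) :
    (⨅ (α : ℝ) (_ : 0 < α ∧
        Tendsto (fun ε : ℝ => f ε * s α ε) (𝓝[>] (0:ℝ)) (𝓝 0)), ENNReal.ofReal α) =
      (⨅ (α : ℝ) (_ : 0 < α ∧
        Tendsto (fun n : ℕ => f (r n) * s α (r n)) atTop (𝓝 0)), ENNReal.ofReal α) ∧
    (⨆ (α : ℝ) (_ : 0 < α ∧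
        Tendsto (fun ε : ℝ => f ε * s α ε) (𝓝[>] (0:ℝ)) atTop), ENNReal.ofReal α) =
      (⨆ (α : ℝ) (_ : 0 < α ∧
        Tendsto (fun n : ℕ => f (r n) * s α (r n)) atTop atTop), ENNReal.ofReal α) := by
  have hr : Tendsto r atTop (𝓝[>] 0) := tendsto_nhdsWithin_iff.2 ⟨hr0, .of_forall hrpos⟩
  refine ⟨le_antisymm ?_ ?_, le_antisymm ?_ ?_⟩
  · exact le_iInf₂ fun α ⟨hα, hseq⟩ => ENNReal.iInf_ofReal_le_of_forall_gt fun β hαβ =>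
      ⟨hα.trans hαβ,
        tendsto_mul_scale_nhds_zero_of_seq hrpos hr0 hrlog hs hfpos hf hα hαβ hseq⟩
  · exact le_iInf₂ fun α ⟨hα, hcont⟩ =>
      iInf₂_le (f := fun α _ => ENNReal.ofReal α) α ⟨hα, hcont.comp hr⟩
  · exact iSup₂_le fun α ⟨hα, hcont⟩ =>
      le_iSup₂ (f := fun α _ => ENNReal.ofReal α) α ⟨hα, hcont.comp hr⟩
  · exact iSup₂_le fun α ⟨hα, hseq⟩ =>
      ENNReal.ofReal_le_iSup_of_forall_lt hα fun β hβ hβα =>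
        ⟨hβ, tendsto_mul_scale_atTop_of_seq hrpos hr0 hrlog hs hfpos hf hβ hβα hseq⟩

/-- Sequential characterization of scales. -/
theorem scale_seq_characterization (s : ℝ → ℝ → ℝ) (hs : IsScaling s)
    (f : ℝ → ℝ) (hfpos : ∀ ε ∈ Set.Ioi (0:ℝ), 0 < f ε) (hf : AntitoneOn f (Set.Ioi 0))
    (r : ℕ → ℝ) (hrpos : ∀ n, 0 < r n) (hrdec : StrictAnti r)
    (hr0 : Tendsto r atTop (𝓝 0))
    (hrlog : Tendsto (fun n => Real.log (r (n + 1)) / Real.log (r n)) atTop (𝓝 1)) :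
    (⨅ (α : ℝ) (_ : 0 < α ∧
        Tendsto (fun ε : ℝ => f ε * s α ε) (𝓝[>] (0:ℝ)) (𝓝 0)), ENNReal.ofReal α) =
      (⨅ (α : ℝ) (_ : 0 < α ∧
        Tendsto (fun n : ℕ => f (r n) * s α (r n)) atTop (𝓝 0)), ENNReal.ofReal α) ∧
    (⨆ (α : ℝ) (_ : 0 < α ∧
        Tendsto (fun ε : ℝ => f ε * s α ε) (𝓝[>] (0:ℝ)) atTop), ENNReal.ofReal α) =
      (⨆ (α : ℝ) (_ : 0 < α ∧
        Tendsto (fun n : ℕ => f (r n) * s α (r n)) atTop atTop), ENNReal.ofReal α) :=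
  scale_seq_characterization_general s hs f hfpos hf r hrpos hr0 hrlog
end
end

section
/- Let (X,d) be a metric space and scl a scaling. Then sup{α > 0 : H^{scl_α}(X) = +∞} = inf{α > 0 : H^{scl_α}(X) = 0} (with sup ∅ = 0 and inf ∅ = +∞), so the Hausdorff scale of X is well defined by either formula. -/
open Filter MeasureTheory Metric Set
open scoped ENNReal Topology NNReal

noncomputable section

/- For `β < α` a scaling satisfies `s α = o(s β)` at `0⁺`, so the Hausdorff measures compare
as `H^{s α} ≤ δ H^{s β}` for every `δ > 0`: once `H^{s β}(X)` is finite, `H^{s α}(X)` vanishes.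
Hence `H^{s α}(X) = ∞` and `H^{s β}(X) = 0` force `α ≤ β`, and every `α` above the supremum of
the first set already lies in the second. -/

lemma iSup_ofReal_eq_iInf_ofReal {P Q : ℝ → Prop} (hQP : ∀ α, Q α → ¬ P α)
    (hPQ : ∀ β α, 0 < β → β < α → ¬ P β → Q α) :
    (⨆ (α : ℝ) (_ : 0 < α ∧ P α), ENNReal.ofReal α) =
      ⨅ (α : ℝ) (_ : 0 < α ∧ Q α), ENNReal.ofReal α := by
  refine le_antisymm ?_ (le_of_forall_gt_imp_ge_of_dense fun c hc => ?_)
  · refine iSup₂_le fun α hα => le_iInf₂ fun β hβ => ENNReal.ofReal_le_ofReal ?_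
    by_contra! hβα
    exact hQP α (hPQ β α hβ.1 hβα (hQP β hβ.2)) hα.2
  · obtain rfl | hc_top := eq_or_ne c ⊤
    · exact le_top
    obtain ⟨d, hd, hdc⟩ := exists_between hc
    have hd_top : d ≠ ⊤ := hdc.ne_top
    have hd_pos : 0 < d.toReal := ENNReal.toReal_pos (pos_of_gt hd).ne' hd_top
    have hnotP : ¬ P d.toReal := fun hP =>
      (le_iSup₂_of_le d.toReal ⟨hd_pos, hP⟩ (ENNReal.ofReal_toReal hd_top).ge).not_gt hd
    have hdc' : d.toReal < c.toReal := (ENNReal.toReal_lt_toReal hd_top hc_top).2 hdc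
    calc (⨅ (α : ℝ) (_ : 0 < α ∧ Q α), ENNReal.ofReal α) ≤ ENNReal.ofReal c.toReal :=
          iInf₂_le _ ⟨hd_pos.trans hdc', hPQ _ _ hd_pos hdc' hnotP⟩
      _ = c := ENNReal.ofReal_toReal hc_top

lemma IsScaling.eventually_le_mul {s : ℝ → ℝ → ℝ} (hs : IsScaling s) {α β δ : ℝ}
    (hβ : 0 < β) (hβα : β < α) (hδ : 0 < δ) :
    ∀ᶠ r in 𝓝[>] (0:ℝ), s α r ≤ δ * s β r := by
  obtain ⟨l₀, hl₀, hl⟩ := hs.2.2 α β hβ hβα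
  obtain ⟨l, hl1, hll₀⟩ := exists_between hl₀
  filter_upwards [(hl l ⟨hl1, hll₀⟩).1 (gt_mem_nhds hδ),
    Ioo_mem_nhdsGT (zero_lt_one' ℝ)] with r hlt hr
  have hrl_le : r ^ l ≤ r := Real.rpow_le_self_of_le_one hr.1.le hr.2.le hl1.le
  have hrl : r ^ l ∈ Ioo (0:ℝ) 1 := ⟨Real.rpow_pos_of_pos hr.1 l, hrl_le.trans_lt hr.2⟩
  calc s α r ≤ δ * s β (r ^ l) := ((div_lt_iff₀ (hs.1 β hβ _ hrl)).1 hlt).le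
    _ ≤ δ * s β r := mul_le_mul_of_nonneg_left (hs.2.1 β hβ hrl hr hrl_le) hδ.le

section Hausdorff

variable {X : Type*} [MetricSpace X]

lemma hausdorffPre_antitone (φ : ℝ → ℝ) (E : Set X) : Antitone (hausdorffPre φ E) :=
  fun _ _ hεε' => iInf_mono fun _ => iInf_mono fun _ => iInf_mono fun _ =>
    iInf_mono' fun hc => ⟨⟨fun n hn => ⟨(hc.1 n hn).1, (hc.1 n hn).2.trans hεε'⟩, hc.2⟩, le_rfl⟩

lemma hausdorffPre_le_ofReal_mul {φ ψ : ℝ → ℝ} (E : Set X) {δ ε : ℝ} (hδ : 0 < δ)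
    (hφψ : ∀ r ∈ Ioc (0:ℝ) ε, φ r ≤ δ * ψ r) :
    hausdorffPre φ E ε ≤ ENNReal.ofReal δ * hausdorffPre ψ E ε := by
  simp only [hausdorffPre, ENNReal.mul_iInf_of_ne (ENNReal.ofReal_pos.2 hδ).ne'
    ENNReal.ofReal_ne_top, ← ENNReal.tsum_mul_left]
  refine iInf_mono fun _ => iInf_mono fun _ => iInf_mono fun _ => iInf_mono fun hc =>
    ENNReal.tsum_le_tsum fun n => ?_
  rw [← ENNReal.ofReal_mul hδ.le]
  exact ENNReal.ofReal_le_ofReal (hφψ _ (hc.1 n n.2))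

lemma hausdorffMeasureOf_le_ofReal_mul {φ ψ : ℝ → ℝ} (E : Set X) {δ : ℝ} (hδ : 0 < δ)
    (hφψ : ∀ᶠ r in 𝓝[>] (0:ℝ), φ r ≤ δ * ψ r) :
    hausdorffMeasureOf φ E ≤ ENNReal.ofReal δ * hausdorffMeasureOf ψ E := by
  obtain ⟨ε₀, hε₀, hsub⟩ := mem_nhdsGT_iff_exists_Ioc_subset.1 hφψ
  refine iSup₂_le fun ε hε => ?_
  calc hausdorffPre φ E ε ≤ hausdorffPre φ E (min ε ε₀) :=
        hausdorffPre_antitone φ E (min_le_left ε ε₀)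
    _ ≤ ENNReal.ofReal δ * hausdorffPre ψ E (min ε ε₀) :=
        hausdorffPre_le_ofReal_mul E hδ fun r hr => hsub ⟨hr.1, hr.2.trans (min_le_right _ _)⟩
    _ ≤ ENNReal.ofReal δ * hausdorffMeasureOf ψ E := by
        gcongr
        exact le_iSup₂_of_le (min ε ε₀) (lt_min hε hε₀) le_rfl

lemma hausdorffMeasureOf_eq_zero_of_forall_eventually_le_mul {φ ψ : ℝ → ℝ} (E : Set X)
    (hφψ : ∀ δ > 0, ∀ᶠ r in 𝓝[>] (0:ℝ), φ r ≤ δ * ψ r) (hψ : hausdorffMeasureOf ψ E ≠ ⊤) :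
    hausdorffMeasureOf φ E = 0 := by
  have hlim : Tendsto (fun δ => ENNReal.ofReal δ * hausdorffMeasureOf ψ E) (𝓝[>] 0) (𝓝 0) := by
    simpa using ENNReal.Tendsto.mul_const
      ((ENNReal.continuous_ofReal.tendsto 0).mono_left nhdsWithin_le_nhds) (Or.inr hψ)
  exact le_antisymm (ge_of_tendsto hlim (eventually_nhdsWithin_of_forall fun δ hδ =>
    hausdorffMeasureOf_le_ofReal_mul E hδ (hφψ δ hδ))) zero_le

end Hausdorff

/-- The Hausdorff scale is well defined:
`sup {α > 0 : H^{scl_α}(X) = ∞} = inf {α > 0 : H^{scl_α}(X) = 0}`. -/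
theorem hausdorffScale_sup_eq_inf
    {X : Type*} [MetricSpace X] (s : ℝ → ℝ → ℝ) (hs : IsScaling s) :
    (⨆ (α : ℝ) (_ : 0 < α ∧ hausdorffMeasureOf (s α) (Set.univ : Set X) = ⊤),
        ENNReal.ofReal α) =
    (⨅ (α : ℝ) (_ : 0 < α ∧ hausdorffMeasureOf (s α) (Set.univ : Set X) = 0),
        ENNReal.ofReal α) :=
  iSup_ofReal_eq_iInf_ofReal (fun _ h0 htop => ENNReal.zero_ne_top (h0 ▸ htop))
    fun _ _ hβ hβα hfin => hausdorffMeasureOf_eq_zero_of_forall_eventually_le_mul univ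
      (fun _ hδ => hs.eventually_le_mul hβ hβα hδ) hfin

end
end
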